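/- arXiv:0706.1373 — 2 statements merged into one kernel-verified Lean document; each statement's English description precedes it below -/
import Mathlib

section
/- Let X be an invertible N×N complex matrix, Y an M×N complex matrix, and P, R constant N×N matrices, Q a constant N×M matrix, satisfying R X + Q Y = X P. Let U, V be N×m-type matrices with Q = V U† (here with M=N, U and V are N×m). Then the m×m matrix φ = U† Y X^{-1} V satisfies tr(φ) = tr(P) - tr(R). -/
open Matrix

namespace Matrix

variable {n k α : Type*} [Fintype n] [DecidableEq n] [Fintype k] [CommRing α]

theorem trace_mul_mul_inv_eq_trace_sub_trace {X P R : Matrix n n α} {Q : Matrix n k α}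
    {Y : Matrix k n α} (hX : IsUnit X) (hRel : R * X + Q * Y = X * P) :
    trace (Q * Y * X⁻¹) = trace P - trace R := by
  have hQY : Q * Y = X * P - R * X := eq_sub_of_add_eq' hRel
  rw [hQY, Matrix.sub_mul, trace_sub, trace_conj hX,
    mul_nonsing_inv_cancel_right X R ((isUnit_iff_isUnit_det X).mp hX)]

end Matrix

theorem trace_identity {N m : ℕ}
    (X Y P R : Matrix (Fin N) (Fin N) ℂ) (Q : Matrix (Fin N) (Fin N) ℂ)
    (U V : Matrix (Fin N) (Fin m) ℂ)
    (hX : IsUnit X) (hRel : R * X + Q * Y = X * P) (hQ : Q = V * Uᴴ) :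
    Matrix.trace (Uᴴ * Y * X⁻¹ * V) = Matrix.trace P - Matrix.trace R := by
  calc trace (Uᴴ * Y * X⁻¹ * V) = trace (V * Uᴴ * Y * X⁻¹) := by
        rw [trace_mul_comm]; simp only [Matrix.mul_assoc]
    _ = trace P - trace R := by
        rw [← hQ]; exact trace_mul_mul_inv_eq_trace_sub_trace hX hRel
end

section
/- Let a, b ∈ ℂ and let β₁, β₂ > 0 satisfy |a|⁴ > β₁β₂(|a|² + |b|²) and |a|² > β₁β₂. Then |a|⁴(|w|² + (1 + β₁⁴|f|²)²) > β₁β₂( |a|²(1 + β₁⁴|f|²) + |b|² + |a w + i b* β₁² f|² ) for all f, w ∈ ℂ. -/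
lemma key_ineq (u B s W' β : ℝ) (hβ : 0 < β) (h4 : β * (u + B^2) < u^2) (h2 : β < u) :
    β * (u * (1 + s^2) + B^2 + (W' + B*s)^2) < u^2 * (1 + s^2)^2 + u * W'^2 := by
  have h2' : 0 < u - β := by linarith
  have hu : 0 < u := lt_trans hβ h2
  have hδ : 0 < u^2 - β*(u+B^2) := by linarith
  nlinarith [h2', sq_nonneg ((u-β)*W' - β*B*s), mul_pos h2' hδ,
    mul_nonneg (mul_nonneg h2'.le hδ.le) (sq_nonneg s),
    mul_nonneg (mul_nonneg (mul_nonneg h2'.le hδ.le) (sq_nonneg s)) (sq_nonneg s),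
    mul_nonneg (mul_nonneg hδ.le hβ.le) (sq_nonneg s),
    mul_nonneg (mul_nonneg (mul_nonneg (mul_nonneg h2'.le hβ.le) hu.le) (sq_nonneg s)) (sq_nonneg s),
    mul_nonneg (mul_nonneg (mul_nonneg h2'.le hβ.le) (sq_nonneg B)) (sq_nonneg s),
    mul_nonneg (mul_nonneg (mul_nonneg (mul_nonneg h2'.le hβ.le) (sq_nonneg B)) (sq_nonneg s)) (sq_nonneg s)]

theorem regularity_inequality (a b : ℂ) (β₁ β₂ : ℝ)
    (hβ₁ : 0 < β₁) (hβ₂ : 0 < β₂)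
    (h4 : β₁ * β₂ * (‖a‖ ^ 2 + ‖b‖ ^ 2) < ‖a‖ ^ 4)
    (h2 : β₁ * β₂ < ‖a‖ ^ 2) :
    ∀ f w : ℂ,
      β₁ * β₂ * (‖a‖ ^ 2 * (1 + β₁ ^ 4 * ‖f‖ ^ 2)
          + ‖b‖ ^ 2
          + ‖a * w + Complex.I * (starRingEnd ℂ) b * (β₁ ^ 2 : ℂ) * f‖ ^ 2)
        < ‖a‖ ^ 4 * (‖w‖ ^ 2 + (1 + β₁ ^ 4 * ‖f‖ ^ 2) ^ 2) := by
  intro f w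
  have hβ : 0 < β₁ * β₂ := mul_pos hβ₁ hβ₂
  have habs : ‖a * w + Complex.I * (starRingEnd ℂ) b * (β₁ ^ 2 : ℂ) * f‖
      ≤ ‖a‖ * ‖w‖ + ‖b‖ * (β₁ ^ 2 * ‖f‖) := by
    refine le_trans (norm_add_le _ _) ?_
    simp [norm_mul, Complex.norm_I, Complex.norm_conj, Complex.norm_real, abs_of_pos hβ₁,
      abs_of_nonneg (sq_nonneg β₁), mul_assoc]
  have hT : ‖a * w + Complex.I * (starRingEnd ℂ) b * (β₁ ^ 2 : ℂ) * f‖ ^ 2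
      ≤ (‖a‖ * ‖w‖ + ‖b‖ * (β₁ ^ 2 * ‖f‖)) ^ 2 :=
    pow_le_pow_left₀ (norm_nonneg _) habs 2
  have key := key_ineq (‖a‖ ^ 2) (‖b‖) (β₁ ^ 2 * ‖f‖)
      (‖a‖ * ‖w‖) (β₁ * β₂) hβ (by nlinarith) (by nlinarith)
  nlinarith [key, hT, hβ]
end
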